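/- arXiv:2401.10807 — 2 statements merged into one kernel-verified Lean document; each statement's English description precedes it below -/
import Mathlib

section
/- Let (V1, V2) be an irreducible 1-finite pair on a complex Hilbert space H. Then [V2*, V1] = 0 (the pair is doubly commuting), V1 and V2 are shifts, the subspace ker V1* ∩ ker V2* = E_1 is one-dimensional, and for any unit vector f ∈ ker V1* ∩ ker V2* the family {V1^m V2^n f : m, n ≥ 0} is an orthonormal basis of H (in particular its linear span is dense in H). -/
open ContinuousLinearMap

section Defs

variable {H : Type*} [NormedAddCommGroup H] [InnerProductSpace ℂ H] [CompleteSpace H]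

/-- The defect operator `C(V₁, V₂) = I - V₁V₁* - V₂V₂* + V₁V₂V₁*V₂*` of a pair of
operators on a complex Hilbert space. -/
noncomputable def defectOp (V₁ V₂ : H →L[ℂ] H) : H →L[ℂ] H :=
  1 - V₁ ∘L adjoint V₁ - V₂ ∘L adjoint V₂ + V₁ ∘L V₂ ∘L adjoint V₁ ∘L adjoint V₂

/-- The cross-commutator `[V₂*, V₁] = V₂*V₁ - V₁V₂*`. -/
noncomputable def crossComm (V₁ V₂ : H →L[ℂ] H) : H →L[ℂ] H :=
  adjoint V₂ ∘L V₁ - V₁ ∘L adjoint V₂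

/-- An isometric pair: both operators are isometries and they commute. -/
def IsIsometricPair (V₁ V₂ : H →L[ℂ] H) : Prop :=
  (∀ x : H, ‖V₁ x‖ = ‖x‖) ∧ (∀ x : H, ‖V₂ x‖ = ‖x‖) ∧ V₁ ∘L V₂ = V₂ ∘L V₁

/-- A shift: an isometry `V` such that `(V*)^n x → 0` for every `x`. -/
def IsShift (V : H →L[ℂ] H) : Prop :=
  (∀ x : H, ‖V x‖ = ‖x‖) ∧
    ∀ x : H, Filter.Tendsto (fun n : ℕ => (adjoint V ^ n) x) Filter.atTop (nhds 0)

/-- A BCL pair: an isometric pair whose product is a shift. -/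
def IsBCLPair (V₁ V₂ : H →L[ℂ] H) : Prop :=
  IsIsometricPair V₁ V₂ ∧ IsShift (V₁ ∘L V₂)

/-- A compact normal pair: a BCL pair whose cross-commutator is compact and normal. -/
def IsCompactNormalPair (V₁ V₂ : H →L[ℂ] H) : Prop :=
  IsBCLPair V₁ V₂ ∧ IsCompactOperator ⇑(crossComm V₁ V₂) ∧
    crossComm V₁ V₂ ∘L adjoint (crossComm V₁ V₂) =
      adjoint (crossComm V₁ V₂) ∘L crossComm V₁ V₂

/-- A subspace reduces the pair `(V₁, V₂)` if it is invariant under `V₁, V₂, V₁*, V₂*`. -/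
def ReducesPair (V₁ V₂ : H →L[ℂ] H) (S : Submodule ℂ H) : Prop :=
  (∀ x ∈ S, V₁ x ∈ S) ∧ (∀ x ∈ S, V₂ x ∈ S) ∧
    (∀ x ∈ S, adjoint V₁ x ∈ S) ∧ (∀ x ∈ S, adjoint V₂ x ∈ S)

/-- A pair is irreducible if its only closed reducing subspaces are `⊥` and `⊤`. -/
def IsIrreduciblePair (V₁ V₂ : H →L[ℂ] H) : Prop :=
  ∀ S : Submodule ℂ H, IsClosed (S : Set H) → ReducesPair V₁ V₂ S → S = ⊥ ∨ S = ⊤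

/-- An `n`-finite pair: a compact normal pair whose defect operator has `n`-dimensional
range. -/
def IsNFinitePair (n : ℕ) (V₁ V₂ : H →L[ℂ] H) : Prop :=
  IsCompactNormalPair V₁ V₂ ∧
    Module.rank ℂ (LinearMap.range (defectOp V₁ V₂ : H →ₗ[ℂ] H)) = n

end Defs


section Aux

variable {H : Type*} [NormedAddCommGroup H] [InnerProductSpace ℂ H] [CompleteSpace H]

local notation "⟪" x ", " y "⟫" => @inner ℂ _ _ x y

/-- norm-preserving CLM preserves inner products -/
lemma aux_inner_map {V : H →L[ℂ] H} (h : ∀ x, ‖V x‖ = ‖x‖) (x y : H) :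
    ⟪V x, V y⟫ = ⟪x, y⟫ := by
  exact LinearIsometry.inner_map_map ⟨V.toLinearMap, h⟩ x y

lemma aux_adj_isom {V : H →L[ℂ] H} (h : ∀ x, ‖V x‖ = ‖x‖) (x : H) :
    adjoint V (V x) = x := by
  apply ext_inner_right ℂ
  intro v
  rw [adjoint_inner_left]
  exact (aux_inner_map h x v).symm ▸ rfl

lemma aux_adj_contract {V : H →L[ℂ] H} (h : ∀ x, ‖V x‖ = ‖x‖) (x : H) :
    ‖adjoint V x‖ ≤ ‖x‖ := by
  have h1 : ‖V‖ ≤ 1 := by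
    apply ContinuousLinearMap.opNorm_le_bound _ zero_le_one
    intro x; rw [h x, one_mul]
  calc ‖adjoint V x‖ ≤ ‖adjoint V‖ * ‖x‖ := ContinuousLinearMap.le_opNorm _ _
    _ ≤ 1 * ‖x‖ := by
        apply mul_le_mul_of_nonneg_right _ (norm_nonneg x)
        rw [(ContinuousLinearMap.adjoint (E := H) (F := H)).norm_map V]; exact h1
    _ = ‖x‖ := one_mul _


lemma aux_defect_apply (V₁ V₂ : H →L[ℂ] H) (x : H) :
    defectOp V₁ V₂ x = x - V₁ (adjoint V₁ x) - V₂ (adjoint V₂ x)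
      + V₁ (V₂ (adjoint V₁ (adjoint V₂ x))) := by
  simp [defectOp, ContinuousLinearMap.sub_apply, ContinuousLinearMap.add_apply,
    ContinuousLinearMap.comp_apply]

lemma aux_ker_eq {V₁ V₂ : H →L[ℂ] H}
    (h₁ : ∀ x, ‖V₁ x‖ = ‖x‖) (h₂ : ∀ x, ‖V₂ x‖ = ‖x‖)
    (cma : ∀ x, adjoint V₁ (adjoint V₂ x) = adjoint V₂ (adjoint V₁ x)) :
    LinearMap.ker (adjoint V₁ : H →ₗ[ℂ] H) ⊓ LinearMap.ker (adjoint V₂ : H →ₗ[ℂ] H) =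
      LinearMap.ker ((defectOp V₁ V₂ - 1 : H →L[ℂ] H) : H →ₗ[ℂ] H) := by
  ext x
  simp only [Submodule.mem_inf, LinearMap.mem_ker, ContinuousLinearMap.coe_coe, ContinuousLinearMap.sub_apply,
    ContinuousLinearMap.one_apply, sub_eq_zero]
  constructor
  · rintro ⟨hx1, hx2⟩
    rw [aux_defect_apply, hx1, hx2]
    simp
  · intro hx
    have hC : ⟪defectOp V₁ V₂ x, x⟫ = ⟪x, x⟫ := by rw [hx]
    rw [aux_defect_apply] at hC
    have e1 : ⟪V₁ (adjoint V₁ x), x⟫ = (‖adjoint V₁ x‖ : ℂ) ^ 2 := by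
      rw [← adjoint_inner_right, inner_self_eq_norm_sq_to_K]; norm_cast
    have e2 : ⟪V₂ (adjoint V₂ x), x⟫ = (‖adjoint V₂ x‖ : ℂ) ^ 2 := by
      rw [← adjoint_inner_right, inner_self_eq_norm_sq_to_K]; norm_cast
    have e3 : ⟪V₁ (V₂ (adjoint V₁ (adjoint V₂ x))), x⟫
        = (‖adjoint V₂ (adjoint V₁ x)‖ : ℂ) ^ 2 := by
      rw [← adjoint_inner_right, ← adjoint_inner_right, cma, inner_self_eq_norm_sq_to_K]; norm_cast
    rw [inner_add_left, inner_sub_left, inner_sub_left, e1, e2, e3] at hC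
    have hre := congrArg Complex.re hC
    simp only [Complex.sub_re, Complex.add_re, ← Complex.ofReal_pow, Complex.ofReal_re] at hre
    -- hre : re⟪x,x⟫ - ‖V₁* x‖² - ‖V₂* x‖² + ‖V₂* V₁* x‖² = re ⟪x,x⟫
    have hb : ‖adjoint V₂ (adjoint V₁ x)‖ ≤ ‖adjoint V₁ x‖ := aux_adj_contract h₂ _
    have h2z : adjoint V₂ x = 0 := by
      have : ‖adjoint V₂ x‖ ^ 2 ≤ 0 := by nlinarith [norm_nonneg (adjoint V₂ (adjoint V₁ x)), norm_nonneg (adjoint V₁ x)]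
      have := pow_eq_zero_iff (n := 2) (by norm_num) |>.mp
        (le_antisymm this (by positivity))
      exact norm_eq_zero.mp this
    refine ⟨?_, h2z⟩
    have hz2 : ‖adjoint V₂ (adjoint V₁ x)‖ = 0 := by
      rw [← cma, h2z, map_zero, norm_zero]
    have : ‖adjoint V₁ x‖ ^ 2 = 0 := by
      rw [h2z, norm_zero] at hre; nlinarith
    exact norm_eq_zero.mp (by nlinarith [norm_nonneg (adjoint V₁ x)])


lemma aux_cross_apply (V₁ V₂ : H →L[ℂ] H) (x : H) :
    crossComm V₁ V₂ x = adjoint V₂ (V₁ x) - V₁ (adjoint V₂ x) := by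
  simp [crossComm, ContinuousLinearMap.sub_apply, ContinuousLinearMap.comp_apply]

lemma aux_adj_cross_apply (V₁ V₂ : H →L[ℂ] H) (x : H) :
    adjoint (crossComm V₁ V₂) x = adjoint V₁ (V₂ x) - V₂ (adjoint V₁ x) := by
  have : adjoint (crossComm V₁ V₂)
      = adjoint V₁ ∘L V₂ - V₂ ∘L adjoint V₁ := by
    simp [crossComm, map_sub, adjoint_comp, adjoint_adjoint]
  rw [this]
  simp [ContinuousLinearMap.sub_apply, ContinuousLinearMap.comp_apply]

lemma aux_D_eq_zero {V₁ V₂ : H →L[ℂ] H}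
    (h₁ : ∀ x, ‖V₁ x‖ = ‖x‖) (h₂ : ∀ x, ‖V₂ x‖ = ‖x‖)
    (hcomm : V₁ ∘L V₂ = V₂ ∘L V₁)
    (hnormal : crossComm V₁ V₂ ∘L adjoint (crossComm V₁ V₂) =
      adjoint (crossComm V₁ V₂) ∘L crossComm V₁ V₂)
    (hrank : Module.rank ℂ (LinearMap.range (defectOp V₁ V₂ : H →ₗ[ℂ] H)) = 1) :
    crossComm V₁ V₂ = 0 := by
  have k₁ : ∀ x, adjoint V₁ (V₁ x) = x := aux_adj_isom h₁
  have k₂ : ∀ x, adjoint V₂ (V₂ x) = x := aux_adj_isom h₂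
  have cm : ∀ x, V₁ (V₂ x) = V₂ (V₁ x) := fun x => by
    have := congrArg (fun A => A x) hcomm; simpa using this
  have hacomm : adjoint V₁ ∘L adjoint V₂ = adjoint V₂ ∘L adjoint V₁ := by
    have := congrArg (fun A => adjoint A) hcomm
    simpa [adjoint_comp] using this.symm
  have cma : ∀ x, adjoint V₁ (adjoint V₂ x) = adjoint V₂ (adjoint V₁ x) := fun x => by
    have := congrArg (fun A => A x) hacomm; simpa using this
  set D := crossComm V₁ V₂ with hD
  -- norm equality from normality
  have bnorm : ∀ z, ‖D z‖ = ‖adjoint D z‖ := by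
    intro z
    have h : ⟪D z, D z⟫ = ⟪adjoint D z, adjoint D z⟫ := by
      rw [← adjoint_inner_left]
      have h1 : adjoint D (D z) = D (adjoint D z) := by
        have := congrArg (fun A => A z) hnormal
        simpa [ContinuousLinearMap.comp_apply] using this.symm
      rw [h1, ← adjoint_inner_right]
    rw [inner_self_eq_norm_sq_to_K, inner_self_eq_norm_sq_to_K] at h
    have h2 : ‖D z‖ ^ 2 = ‖adjoint D z‖ ^ 2 := by exact_mod_cast h
    calc ‖D z‖ = √(‖D z‖ ^ 2) := (Real.sqrt_sq (norm_nonneg _)).symm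
      _ = √(‖adjoint D z‖ ^ 2) := by rw [h2]
      _ = ‖adjoint D z‖ := Real.sqrt_sq (norm_nonneg _)
  have br2 : ∀ x, D (V₂ x) = 0 := by
    intro x; rw [aux_cross_apply, cm, k₂, k₂, sub_self]
  have badj1 : ∀ x, adjoint D (V₁ x) = 0 := by
    intro x; rw [aux_adj_cross_apply, ← cm, k₁, k₁, sub_self]
  have br1 : ∀ x, D (V₁ x) = 0 := by
    intro x
    have := bnorm (V₁ x)
    rw [badj1, norm_zero, norm_eq_zero] at this
    exact this
  set E₁ := LinearMap.ker (adjoint V₁ : H →ₗ[ℂ] H) ⊓ LinearMap.ker (adjoint V₂ : H →ₗ[ℂ] H) with hE₁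
  set K := LinearMap.range (V₁ : H →ₗ[ℂ] H) ⊔ LinearMap.range (V₂ : H →ₗ[ℂ] H) with hK
  have hKE : E₁ = Kᗮ := by
    ext x
    rw [hE₁, Submodule.mem_inf, LinearMap.mem_ker, LinearMap.mem_ker, ContinuousLinearMap.coe_coe,
      ContinuousLinearMap.coe_coe]
    constructor
    · rintro ⟨hx1, hx2⟩
      intro u hu
      rw [hK, Submodule.mem_sup] at hu
      obtain ⟨a, ⟨a', rfl⟩, b, ⟨b', rfl⟩, rfl⟩ := hu
      rw [ContinuousLinearMap.coe_coe, ContinuousLinearMap.coe_coe, inner_add_left, ← adjoint_inner_right, ← adjoint_inner_right, hx1, hx2]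
      simp
    · intro hx
      constructor
      · rw [← inner_self_eq_zero (𝕜 := ℂ)]
        rw [adjoint_inner_left]
        rw [← inner_conj_symm]
        rw [hx (V₁ (adjoint V₁ x)) (Submodule.mem_sup_left ⟨_, rfl⟩), map_zero]
      · rw [← inner_self_eq_zero (𝕜 := ℂ)]
        rw [adjoint_inner_left]
        rw [← inner_conj_symm]
        rw [hx (V₂ (adjoint V₂ x)) (Submodule.mem_sup_right ⟨_, rfl⟩), map_zero]
  have hDK : ∀ u ∈ K, D u = 0 := by
    intro u hu
    rw [hK, Submodule.mem_sup] at hu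
    obtain ⟨a, ⟨a', rfl⟩, b, ⟨b', rfl⟩, rfl⟩ := hu
    rw [ContinuousLinearMap.coe_coe, ContinuousLinearMap.coe_coe, map_add, br1, br2, add_zero]
  have hDKc : ∀ u ∈ K.topologicalClosure, D u = 0 := by
    intro u hu
    have hsub : (K : Set H) ⊆ (⇑D) ⁻¹' {0} := fun v hv => hDK v hv
    have hcl : closure (K : Set H) ⊆ (⇑D) ⁻¹' {0} :=
      closure_minimal hsub (IsClosed.preimage D.continuous isClosed_singleton)
    have : u ∈ closure (K : Set H) := by
      rw [← Submodule.topologicalClosure_coe]; exact hu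
    exact hcl this
  -- E₁ part via rank-one range
  have hrankle : Module.rank ℂ (LinearMap.range (defectOp V₁ V₂ : H →ₗ[ℂ] H)) ≤ 1 := le_of_eq hrank
  obtain ⟨v₀, hv₀⟩ := rank_le_one_iff.mp hrankle
  have hDE : ∀ y ∈ E₁, D y = 0 := by
    intro y hy
    rw [hE₁, Submodule.mem_inf, LinearMap.mem_ker, LinearMap.mem_ker, ContinuousLinearMap.coe_coe,
      ContinuousLinearMap.coe_coe] at hy
    obtain ⟨hy1, hy2⟩ := hy
    by_cases hyz : y = 0
    · rw [hyz, map_zero]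
    have hCy : defectOp V₁ V₂ y = y := by
      rw [aux_defect_apply, hy1, hy2]; simp
    have hyr : y ∈ LinearMap.range (defectOp V₁ V₂ : H →ₗ[ℂ] H) := ⟨y, hCy⟩
    have hCV1y : defectOp V₁ V₂ (V₁ y) = -(V₂ (adjoint V₂ (V₁ y))) := by
      rw [aux_defect_apply, k₁, cma, k₁, hy2]
      simp
    have hwr : defectOp V₁ V₂ (V₁ y) ∈ LinearMap.range (defectOp V₁ V₂ : H →ₗ[ℂ] H) := ⟨V₁ y, rfl⟩
    obtain ⟨r, hr⟩ := hv₀ ⟨y, hyr⟩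
    obtain ⟨s, hs⟩ := hv₀ ⟨defectOp V₁ V₂ (V₁ y), hwr⟩
    have hrne : r ≠ 0 := by
      rintro rfl
      rw [zero_smul] at hr
      exact hyz (congrArg Subtype.val hr).symm
    have hv₀y : v₀ = r⁻¹ • (⟨y, hyr⟩ : LinearMap.range (defectOp V₁ V₂ : H →ₗ[ℂ] H)) := by
      rw [← hr, smul_smul, inv_mul_cancel₀ hrne, one_smul]
    have hw : defectOp V₁ V₂ (V₁ y) = (s * r⁻¹) • y := by
      have := hs
      rw [hv₀y, smul_smul] at this
      exact (congrArg Subtype.val this).symm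
    have hinner : ⟪defectOp V₁ V₂ (V₁ y), y⟫ = 0 := by
      rw [hCV1y, inner_neg_left, ← adjoint_inner_right, hy2, inner_zero_right, neg_zero]
    rw [hw, inner_smul_left, mul_eq_zero] at hinner
    have hyy : ⟪y, y⟫ ≠ 0 := fun h => hyz (inner_self_eq_zero.mp h)
    have hsr : s * r⁻¹ = 0 := by
      rcases hinner with h | h
      · exact star_eq_zero.mp h
      · exact absurd h hyy
    rw [hsr, zero_smul] at hw
    have hV2V1y : adjoint V₂ (V₁ y) = 0 := by
      have h0 : V₂ (adjoint V₂ (V₁ y)) = 0 := by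
        have := hCV1y.symm.trans hw
        rwa [neg_eq_zero] at this
      have := h₂ (adjoint V₂ (V₁ y))
      rw [h0, norm_zero] at this
      exact norm_eq_zero.mp this.symm
    rw [aux_cross_apply, hV2V1y, hy2, map_zero, sub_zero]
  -- combine
  ext x
  have hE₁closed : IsClosed (E₁ : Set H) := by
    rw [hE₁, Submodule.coe_inf]
    exact IsClosed.inter (ContinuousLinearMap.isClosed_ker _) (ContinuousLinearMap.isClosed_ker _)
  haveI : CompleteSpace E₁ := hE₁closed.completeSpace_coe
  obtain ⟨a, ha, b, hb, rfl⟩ := Submodule.exists_add_mem_mem_orthogonal (K := E₁) x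
  have hbK : b ∈ K.topologicalClosure := by
    rw [← Submodule.orthogonal_orthogonal_eq_closure, ← hKE]
    exact hb
  rw [ContinuousLinearMap.zero_apply, map_add, hDE a ha, hDKc b hbK, add_zero]


lemma aux_C_idem {V₁ V₂ : H →L[ℂ] H}
    (k₁ : ∀ x, adjoint V₁ (V₁ x) = x) (k₂ : ∀ x, adjoint V₂ (V₂ x) = x)
    (cm : ∀ x, V₁ (V₂ x) = V₂ (V₁ x))
    (cma : ∀ x, adjoint V₁ (adjoint V₂ x) = adjoint V₂ (adjoint V₁ x))
    (d0 : ∀ x, adjoint V₂ (V₁ x) = V₁ (adjoint V₂ x))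
    (d0' : ∀ x, adjoint V₁ (V₂ x) = V₂ (adjoint V₁ x)) (x : H) :
    defectOp V₁ V₂ (defectOp V₁ V₂ x) = defectOp V₁ V₂ x := by
  simp only [aux_defect_apply, map_sub, map_add]
  simp only [cm, cma, d0, d0', k₁, k₂]
  abel

lemma aux_ker_eq_range {V₁ V₂ : H →L[ℂ] H}
    (k₁ : ∀ x, adjoint V₁ (V₁ x) = x) (k₂ : ∀ x, adjoint V₂ (V₂ x) = x)
    (cm : ∀ x, V₁ (V₂ x) = V₂ (V₁ x))
    (cma : ∀ x, adjoint V₁ (adjoint V₂ x) = adjoint V₂ (adjoint V₁ x))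
    (d0 : ∀ x, adjoint V₂ (V₁ x) = V₁ (adjoint V₂ x))
    (d0' : ∀ x, adjoint V₁ (V₂ x) = V₂ (adjoint V₁ x)) :
    LinearMap.ker ((defectOp V₁ V₂ - 1 : H →L[ℂ] H) : H →ₗ[ℂ] H) = LinearMap.range (defectOp V₁ V₂ : H →ₗ[ℂ] H) := by
  ext x
  rw [LinearMap.mem_ker, ContinuousLinearMap.coe_coe, ContinuousLinearMap.sub_apply, ContinuousLinearMap.one_apply,
    sub_eq_zero]
  constructor
  · intro hx; exact ⟨x, hx⟩
  · rintro ⟨y, rfl⟩; exact aux_C_idem k₁ k₂ cm cma d0 d0' y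


lemma aux_pow_apply_succ (V : H →L[ℂ] H) (n : ℕ) (x : H) :
    (V ^ (n + 1)) x = V ((V ^ n) x) := by
  rw [pow_succ']; rfl

lemma aux_pow_norm {V : H →L[ℂ] H} (h : ∀ x, ‖V x‖ = ‖x‖) (n : ℕ) (x : H) :
    ‖(V ^ n) x‖ = ‖x‖ := by
  induction n with
  | zero => simp
  | succ k ih => rw [aux_pow_apply_succ, h, ih]

lemma aux_pow_inner {V : H →L[ℂ] H} (h : ∀ x, ‖V x‖ = ‖x‖) (n : ℕ) (x y : H) :
    ⟪(V ^ n) x, (V ^ n) y⟫ = ⟪x, y⟫ := by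
  induction n with
  | zero => simp
  | succ k ih => rw [aux_pow_apply_succ, aux_pow_apply_succ, aux_inner_map h, ih]

lemma aux_pow_comm {V W : H →L[ℂ] H} (cm : ∀ x, V (W x) = W (V x)) (n : ℕ) (x : H) :
    (V ^ n) (W x) = W ((V ^ n) x) := by
  induction n with
  | zero => simp
  | succ k ih => rw [aux_pow_apply_succ, aux_pow_apply_succ, ih, cm]

lemma aux_shift {V₁ V₂ : H →L[ℂ] H}
    (h₁ : ∀ x, ‖V₁ x‖ = ‖x‖)
    (cm : ∀ x, V₁ (V₂ x) = V₂ (V₁ x))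
    (d0 : ∀ x, adjoint V₂ (V₁ x) = V₁ (adjoint V₂ x))
    (hirr : IsIrreduciblePair V₁ V₂)
    (hnotsurj : ¬ Function.Surjective ⇑V₁) :
    IsShift V₁ := by
  have k₁ : ∀ x, adjoint V₁ (V₁ x) = x := aux_adj_isom h₁
  refine ⟨h₁, ?_⟩
  set M : ℕ → Submodule ℂ H := fun n => LinearMap.range ((V₁ ^ n : H →L[ℂ] H) : H →ₗ[ℂ] H) with hM
  have hMmem : ∀ n x, x ∈ M n ↔ ∃ y, (V₁ ^ n) y = x := by
    intro n x; rw [hM]; exact LinearMap.mem_range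
  have hMmono : ∀ k n, k ≤ n → M n ≤ M k := by
    intro k n hkn y hy
    obtain ⟨w, rfl⟩ := (hMmem n y).mp hy
    refine (hMmem k _).mpr ⟨(V₁ ^ (n - k)) w, ?_⟩
    rw [← ContinuousLinearMap.mul_apply, ← pow_add]
    congr 2
    omega
  have hMc : ∀ n, IsClosed ((M n : Set H)) := by
    intro n
    have hiso : Isometry ⇑(V₁ ^ n : H →L[ℂ] H) :=
      AddMonoidHomClass.isometry_of_norm _ (aux_pow_norm h₁ n)
    have : (M n : Set H) = Set.range ⇑(V₁ ^ n : H →L[ℂ] H) := by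
      ext y; simp [hMmem, Set.mem_range]
    rw [this]
    exact hiso.isClosedEmbedding.isClosed_range
  set U : Submodule ℂ H := ⨅ n, M n with hU
  have hUmem : ∀ x, x ∈ U ↔ ∀ n, x ∈ M n := fun x => Submodule.mem_iInf M
  have hUc : IsClosed (U : Set H) := by
    have : (U : Set H) = ⋂ n, (M n : Set H) := by
      ext y; simp [hUmem, Set.mem_iInter]
    rw [this]
    exact isClosed_iInter fun n => hMc n
  have hred : ReducesPair V₁ V₂ U := by
    refine ⟨?_, ?_, ?_, ?_⟩
    · intro x hx
      rw [hUmem] at hx ⊢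
      intro n
      rcases n with _ | k
      · simp [hMmem]
      · obtain ⟨y, rfl⟩ := (hMmem k x).mp (hx k)
        exact (hMmem (k+1) _).mpr ⟨y, aux_pow_apply_succ V₁ k y⟩
    · intro x hx
      rw [hUmem] at hx ⊢
      intro n
      obtain ⟨y, rfl⟩ := (hMmem n x).mp (hx n)
      exact (hMmem n _).mpr ⟨V₂ y, aux_pow_comm cm n y⟩
    · intro x hx
      rw [hUmem] at hx ⊢
      intro n
      obtain ⟨y, rfl⟩ := (hMmem (n+1) x).mp (hx (n+1))
      refine (hMmem n _).mpr ⟨y, ?_⟩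
      rw [aux_pow_apply_succ, k₁]
    · intro x hx
      rw [hUmem] at hx ⊢
      intro n
      obtain ⟨y, rfl⟩ := (hMmem n x).mp (hx n)
      exact (hMmem n _).mpr ⟨adjoint V₂ y, aux_pow_comm (fun w => (d0 w).symm) n y⟩
  rcases hirr U hUc hred with hUbot | hUtop
  swap
  · exfalso
    apply hnotsurj
    intro x
    have hx : x ∈ M 1 := by
      have : x ∈ U := by rw [hUtop]; trivial
      exact (hUmem x).mp this 1
    obtain ⟨y, hy⟩ := (hMmem 1 x).mp hx
    exact ⟨y, by rw [← hy, pow_one]⟩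
  -- the shift convergence
  intro x
  have apow : ∀ n : ℕ, (adjoint V₁ ^ n : H →L[ℂ] H) = adjoint (V₁ ^ n) := by
    intro n
    rw [← ContinuousLinearMap.star_eq_adjoint, ← ContinuousLinearMap.star_eq_adjoint, ← star_pow]
  set a : ℕ → H := fun n => adjoint (V₁ ^ n) x with ha
  set u : ℕ → H := fun n => (V₁ ^ n) (a n) with hu
  have hnormau : ∀ n, ‖a n‖ = ‖u n‖ := fun n => (aux_pow_norm h₁ n (a n)).symm
  have key : ∀ m n, n ≤ m → ⟪u m, u n⟫ = ((‖u m‖ : ℂ)) ^ 2 := by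
    intro m n hnm
    have hsplit : (V₁ : H →L[ℂ] H) ^ m = (V₁ ^ n) * (V₁ ^ (m - n)) := by
      rw [← pow_add]; congr 1; omega
    have e1 : ⟪u m, u n⟫ = ⟪(V₁ ^ (m - n)) (a m), a n⟫ := by
      show ⟪(V₁ ^ m) (a m), (V₁ ^ n) (a n)⟫ = _
      rw [hsplit, ContinuousLinearMap.mul_apply, aux_pow_inner h₁ n]
    have e2 : ⟪(V₁ ^ (m - n)) (a m), a n⟫ = ⟪u m, x⟫ := by
      show _ = ⟪(V₁ ^ m) (a m), x⟫
      rw [ha]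
      rw [adjoint_inner_right, hsplit, ContinuousLinearMap.mul_apply]
    have e3 : ⟪u m, x⟫ = ((‖u m‖ : ℂ)) ^ 2 := by
      have h4 : ⟪u m, x⟫ = ⟪a m, a m⟫ := (adjoint_inner_right (V₁ ^ m) (a m) x).symm
      rw [h4, inner_self_eq_norm_sq_to_K, hnormau m]; norm_cast
    rw [e1, e2, e3]
  have hdiff : ∀ n m, n ≤ m → ‖u n - u m‖ ^ 2 = ‖u n‖ ^ 2 - ‖u m‖ ^ 2 := by
    intro n m hnm
    have h1 : RCLike.re ⟪u n, u m⟫ = ‖u m‖ ^ 2 := by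
      rw [← inner_conj_symm, key m n hnm]
      simp [← Complex.ofReal_pow]
    rw [@norm_sub_sq ℂ, h1]
    ring
  set c : ℕ → ℝ := fun n => ‖u n‖ ^ 2 with hc
  have hant : Antitone c := by
    intro n m hnm
    simp only [hc]
    nlinarith [sq_nonneg ‖u n - u m‖, hdiff n m hnm]
  have hbdd : BddBelow (Set.range c) := by
    refine ⟨0, ?_⟩
    rintro y ⟨n, rfl⟩
    positivity
  have htend : Filter.Tendsto c Filter.atTop (nhds (⨅ n, c n)) := tendsto_atTop_ciInf hant hbdd
  have hcc : CauchySeq c := htend.cauchySeq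
  have hcu : CauchySeq u := by
    rw [Metric.cauchySeq_iff']
    intro ε hε
    obtain ⟨N, hN⟩ := Metric.cauchySeq_iff'.mp hcc (ε ^ 2) (by positivity)
    refine ⟨N, fun n hn => ?_⟩
    have h2 : ‖u n - u N‖ ^ 2 < ε ^ 2 := by
      rw [norm_sub_rev, hdiff N n hn]
      have h5 := hN n hn
      rw [Real.dist_eq] at h5
      have h3 : c N - c n ≤ |c n - c N| := by
        rw [abs_sub_comm]; exact le_abs_self _
      have h6 : c N - c n < ε ^ 2 := lt_of_le_of_lt h3 h5
      simpa [hc] using h6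
    rw [dist_eq_norm]
    exact lt_of_pow_lt_pow_left₀ 2 (le_of_lt hε) h2
  obtain ⟨z, hz⟩ := cauchySeq_tendsto_of_complete hcu
  have hzU : z ∈ U := by
    rw [hUmem]
    intro k
    refine (hMc k).mem_of_tendsto hz ?_
    rw [Filter.eventually_atTop]
    refine ⟨k, fun n hn => ?_⟩
    exact hMmono k n hn ((hMmem n (u n)).mpr ⟨a n, rfl⟩)
  have hz0 : z = 0 := by
    rw [hUbot] at hzU
    simpa using hzU
  rw [hz0] at hz
  have hnu : Filter.Tendsto (fun n => ‖u n‖) Filter.atTop (nhds 0) := by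
    simpa using hz.norm
  have hna : Filter.Tendsto (fun n => ‖(adjoint V₁ ^ n) x‖) Filter.atTop (nhds 0) := by
    refine hnu.congr fun n => ?_
    rw [← hnormau n, ha, apow n]
  exact tendsto_zero_iff_norm_tendsto_zero.mpr hna


lemma aux_orth {V₁ V₂ : H →L[ℂ] H}
    (h₁ : ∀ x, ‖V₁ x‖ = ‖x‖) (h₂ : ∀ x, ‖V₂ x‖ = ‖x‖)
    (d0' : ∀ x, adjoint V₁ (V₂ x) = V₂ (adjoint V₁ x))
    {f : H} (hf1 : adjoint V₁ f = 0) (hf2 : adjoint V₂ f = 0) (hfn : ‖f‖ = 1) :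
    Orthonormal ℂ (fun p : ℕ × ℕ => (V₁ ^ p.1) ((V₂ ^ p.2) f)) := by
  have hV1perp : ∀ (k n n' : ℕ), ⟪(V₁ ^ (k+1)) ((V₂ ^ n) f), (V₂ ^ n') f⟫ = 0 := by
    intro k n n'
    rw [aux_pow_apply_succ, ← adjoint_inner_right,
      ← aux_pow_comm (fun w => (d0' w).symm) n' f, hf1, map_zero, inner_zero_right]
  have main_gt : ∀ m m' n n', m' < m →
      ⟪(V₁ ^ m) ((V₂ ^ n) f), (V₁ ^ m') ((V₂ ^ n') f)⟫ = 0 := by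
    intro m m' n n' h
    have hsplit : (V₁ : H →L[ℂ] H) ^ m = V₁ ^ m' * V₁ ^ ((m - m' - 1) + 1) := by
      rw [← pow_add]; congr 1; omega
    rw [hsplit, ContinuousLinearMap.mul_apply, aux_pow_inner h₁ m']
    exact hV1perp _ n n'
  have n_gt : ∀ n n', n' < n → ⟪(V₂ ^ n) f, (V₂ ^ n') f⟫ = 0 := by
    intro n n' h
    have hsplit : (V₂ : H →L[ℂ] H) ^ n = V₂ ^ n' * V₂ ^ ((n - n' - 1) + 1) := by
      rw [← pow_add]; congr 1; omega
    rw [hsplit, ContinuousLinearMap.mul_apply, aux_pow_inner h₂ n',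
      aux_pow_apply_succ, ← adjoint_inner_right, hf2, inner_zero_right]
  rw [orthonormal_iff_ite]
  rintro ⟨m, n⟩ ⟨m', n'⟩
  show ⟪(V₁ ^ m) ((V₂ ^ n) f), (V₁ ^ m') ((V₂ ^ n') f)⟫ = _
  rcases lt_trichotomy m m' with hm | rfl | hm
  · rw [← inner_conj_symm, main_gt m' m n' n hm, map_zero,
      if_neg (by simp only [Prod.mk.injEq]; omega)]
  · rw [aux_pow_inner h₁ m]
    rcases lt_trichotomy n n' with hn | rfl | hn
    · rw [← inner_conj_symm, n_gt n' n hn, map_zero,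
        if_neg (by simp only [Prod.mk.injEq]; omega)]
    · rw [if_pos rfl, inner_self_eq_norm_sq_to_K, aux_pow_norm h₂, hfn]
      norm_num
    · rw [n_gt n n' hn, if_neg (by simp only [Prod.mk.injEq]; omega)]
  · rw [main_gt m m' n n' hm, if_neg (by simp only [Prod.mk.injEq]; omega)]

lemma aux_dense {V₁ V₂ : H →L[ℂ] H}
    (h₁ : ∀ x, ‖V₁ x‖ = ‖x‖) (h₂ : ∀ x, ‖V₂ x‖ = ‖x‖)
    (cm : ∀ x, V₁ (V₂ x) = V₂ (V₁ x))
    (d0 : ∀ x, adjoint V₂ (V₁ x) = V₁ (adjoint V₂ x))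
    (d0' : ∀ x, adjoint V₁ (V₂ x) = V₂ (adjoint V₁ x))
    (hirr : IsIrreduciblePair V₁ V₂)
    {f : H} (hf1 : adjoint V₁ f = 0) (hf2 : adjoint V₂ f = 0) (hfn : ‖f‖ = 1) :
    (Submodule.span ℂ
        (Set.range fun p : ℕ × ℕ => (V₁ ^ p.1) ((V₂ ^ p.2) f))).topologicalClosure = ⊤ := by
  have k₁ := aux_adj_isom h₁
  have k₂ := aux_adj_isom h₂
  set e : ℕ × ℕ → H := fun p => (V₁ ^ p.1) ((V₂ ^ p.2) f) with he
  set S₀ : Submodule ℂ H := Submodule.span ℂ (Set.range e) with hS₀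
  set S : Submodule ℂ H := S₀.topologicalClosure with hS
  have hgen : ∀ p : ℕ × ℕ, e p ∈ S₀ := fun p => Submodule.subset_span ⟨p, rfl⟩
  have hstep : ∀ (A : H →L[ℂ] H), (∀ p : ℕ × ℕ, A (e p) ∈ S₀) → ∀ x ∈ S₀, A x ∈ S₀ := by
    intro A hA x hx
    have h1 : A x ∈ Submodule.map (A : H →ₗ[ℂ] H) S₀ := Submodule.mem_map_of_mem (f := (A : H →ₗ[ℂ] H)) hx
    rw [hS₀, Submodule.map_span] at h1
    refine Submodule.span_le.mpr ?_ h1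
    rintro y ⟨g, ⟨p, rfl⟩, rfl⟩
    exact hA p
  have hclosure : ∀ (A : H →L[ℂ] H), (∀ p : ℕ × ℕ, A (e p) ∈ S₀) → ∀ x ∈ S, A x ∈ S := by
    intro A hA x hx
    have hx' : x ∈ closure (S₀ : Set H) := by
      rw [← Submodule.topologicalClosure_coe]; exact hx
    have hsub : (S₀ : Set H) ⊆ (⇑A) ⁻¹' (S : Set H) := by
      intro y hy
      have : A y ∈ S₀ := hstep A hA y hy
      exact Submodule.le_topologicalClosure S₀ this
    have hcl : closure (S₀ : Set H) ⊆ (⇑A) ⁻¹' (S : Set H) :=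
      closure_minimal hsub (IsClosed.preimage A.continuous S₀.isClosed_topologicalClosure)
    exact hcl hx'
  have hred : ReducesPair V₁ V₂ S := by
    refine ⟨hclosure V₁ ?_, hclosure V₂ ?_, hclosure (adjoint V₁) ?_, hclosure (adjoint V₂) ?_⟩
    · rintro ⟨m, n⟩
      have : V₁ (e (m, n)) = e (m + 1, n) := (aux_pow_apply_succ V₁ m _).symm
      rw [this]; exact hgen _
    · rintro ⟨m, n⟩
      have : V₂ (e (m, n)) = e (m, n + 1) := by
        rw [he]
        show V₂ ((V₁ ^ m) ((V₂ ^ n) f)) = (V₁ ^ m) ((V₂ ^ (n+1)) f)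
        rw [← aux_pow_comm cm m, aux_pow_apply_succ]
      rw [this]; exact hgen _
    · rintro ⟨m, n⟩
      rcases m with _ | k
      · have : adjoint V₁ (e (0, n)) = 0 := by
          show adjoint V₁ ((V₁ ^ 0) ((V₂ ^ n) f)) = 0
          rw [pow_zero, ContinuousLinearMap.one_apply,
            ← aux_pow_comm (fun w => (d0' w).symm) n f, hf1, map_zero]
        rw [this]; exact Submodule.zero_mem _
      · have : adjoint V₁ (e (k + 1, n)) = e (k, n) := by
          show adjoint V₁ ((V₁ ^ (k+1)) ((V₂ ^ n) f)) = (V₁ ^ k) ((V₂ ^ n) f)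
          rw [aux_pow_apply_succ, k₁]
        rw [this]; exact hgen _
    · rintro ⟨m, n⟩
      have hcm : adjoint V₂ (e (m, n)) = (V₁ ^ m) (adjoint V₂ ((V₂ ^ n) f)) := by
        show adjoint V₂ ((V₁ ^ m) ((V₂ ^ n) f)) = _
        rw [← aux_pow_comm (fun w => (d0 w).symm) m]
      rcases n with _ | j
      · rw [hcm, pow_zero, ContinuousLinearMap.one_apply, hf2, map_zero]
        exact Submodule.zero_mem _
      · have : adjoint V₂ ((V₂ ^ (j+1)) f) = (V₂ ^ j) f := by
          rw [aux_pow_apply_succ, k₂]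
        rw [hcm, this]; exact hgen (m, j)
  rcases hirr S S₀.isClosed_topologicalClosure hred with hbot | htop
  · exfalso
    have hfS : f ∈ S := by
      have : f = e (0, 0) := by rw [he]; simp
      rw [this]
      exact Submodule.le_topologicalClosure S₀ (hgen (0, 0))
    rw [hbot] at hfS
    rw [Submodule.mem_bot] at hfS
    rw [hfS, norm_zero] at hfn
    norm_num at hfn
  · exact htop

end Aux

section Main

local notation "⟪" x ", " y "⟫" => @inner ℂ _ _ x y

/-- Structure of irreducible `1`-finite pairs: the cross-commutator
vanishes, both operators are shifts, `ker V₁* ∩ ker V₂* = E₁` is one-dimensional, and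
any unit vector `f` there generates an orthonormal basis `{V₁^m V₂^n f}` of `H`. -/
theorem stmt_15 {H : Type*} [NormedAddCommGroup H] [InnerProductSpace ℂ H] [CompleteSpace H]
    (V₁ V₂ : H →L[ℂ] H)
    (hirr : IsIrreduciblePair V₁ V₂)
    (h1 : IsNFinitePair 1 V₁ V₂) :
    crossComm V₁ V₂ = 0 ∧
      IsShift V₁ ∧ IsShift V₂ ∧
      LinearMap.ker (adjoint V₁ : H →ₗ[ℂ] H) ⊓ LinearMap.ker (adjoint V₂ : H →ₗ[ℂ] H) =
        LinearMap.ker ((defectOp V₁ V₂ - 1 : H →L[ℂ] H) : H →ₗ[ℂ] H) ∧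
      Module.rank ℂ (LinearMap.ker ((defectOp V₁ V₂ - 1 : H →L[ℂ] H) : H →ₗ[ℂ] H)) = 1 ∧
      ∀ f : H, f ∈ LinearMap.ker (adjoint V₁ : H →ₗ[ℂ] H) ⊓ LinearMap.ker (adjoint V₂ : H →ₗ[ℂ] H) → ‖f‖ = 1 →
        Orthonormal ℂ (fun p : ℕ × ℕ => (V₁ ^ p.1) ((V₂ ^ p.2) f)) ∧
        (Submodule.span ℂ
            (Set.range fun p : ℕ × ℕ => (V₁ ^ p.1) ((V₂ ^ p.2) f))).topologicalClosure =
          ⊤ := by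
  obtain ⟨⟨⟨⟨h₁, h₂, hcomm⟩, hbcl⟩, hcpt, hnormal⟩, hrank⟩ := h1
  have k₁ : ∀ x, adjoint V₁ (V₁ x) = x := aux_adj_isom h₁
  have k₂ : ∀ x, adjoint V₂ (V₂ x) = x := aux_adj_isom h₂
  have cm : ∀ x, V₁ (V₂ x) = V₂ (V₁ x) := fun x => by
    have := congrArg (fun A : H →L[ℂ] H => A x) hcomm; simpa using this
  have hacomm : adjoint V₁ ∘L adjoint V₂ = adjoint V₂ ∘L adjoint V₁ := by
    have := congrArg (fun A => adjoint A) hcomm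
    simpa [adjoint_comp] using this.symm
  have cma : ∀ x, adjoint V₁ (adjoint V₂ x) = adjoint V₂ (adjoint V₁ x) := fun x => by
    have := congrArg (fun A : H →L[ℂ] H => A x) hacomm; simpa using this
  have hD0 : crossComm V₁ V₂ = 0 := aux_D_eq_zero h₁ h₂ hcomm hnormal hrank
  have d0 : ∀ x, adjoint V₂ (V₁ x) = V₁ (adjoint V₂ x) := by
    intro x
    have := congrArg (fun A : H →L[ℂ] H => A x) hD0
    simp only [ContinuousLinearMap.zero_apply] at this
    rw [aux_cross_apply] at this
    exact sub_eq_zero.mp this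
  have hD0' : adjoint (crossComm V₁ V₂) = 0 := by rw [hD0]; simp
  have d0' : ∀ x, adjoint V₁ (V₂ x) = V₂ (adjoint V₁ x) := by
    intro x
    have := congrArg (fun A : H →L[ℂ] H => A x) hD0'
    simp only [ContinuousLinearMap.zero_apply] at this
    rw [aux_adj_cross_apply] at this
    exact sub_eq_zero.mp this
  have hkerC : LinearMap.ker (adjoint V₁ : H →ₗ[ℂ] H) ⊓ LinearMap.ker (adjoint V₂ : H →ₗ[ℂ] H) =
      LinearMap.ker ((defectOp V₁ V₂ - 1 : H →L[ℂ] H) : H →ₗ[ℂ] H) := aux_ker_eq h₁ h₂ cma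
  have hkerrange : LinearMap.ker ((defectOp V₁ V₂ - 1 : H →L[ℂ] H) : H →ₗ[ℂ] H) = LinearMap.range (defectOp V₁ V₂ : H →ₗ[ℂ] H) :=
    aux_ker_eq_range k₁ k₂ cm cma d0 d0'
  have hrank1 : Module.rank ℂ (LinearMap.ker ((defectOp V₁ V₂ - 1 : H →L[ℂ] H) : H →ₗ[ℂ] H)) = 1 := by
    rw [hkerrange, hrank]; norm_num
  -- non-surjectivity
  have hns1 : ¬ Function.Surjective ⇑V₁ := by
    intro hsurj
    have hP1 : ∀ z, V₁ (adjoint V₁ z) = z := by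
      intro z
      obtain ⟨y, rfl⟩ := hsurj z
      rw [k₁]
    have hC0 : defectOp V₁ V₂ = 0 := by
      ext x
      rw [aux_defect_apply, ContinuousLinearMap.zero_apply, cm, hP1, hP1]
      abel
    rw [hC0] at hrank
    have : LinearMap.range ((0 : H →L[ℂ] H) : H →ₗ[ℂ] H) = ⊥ := by
      ext y; simp [LinearMap.mem_range, eq_comm]
    rw [this, rank_bot] at hrank
    norm_num at hrank
  have hns2 : ¬ Function.Surjective ⇑V₂ := by
    intro hsurj
    have hP2 : ∀ z, V₂ (adjoint V₂ z) = z := by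
      intro z
      obtain ⟨y, rfl⟩ := hsurj z
      rw [k₂]
    have hC0 : defectOp V₁ V₂ = 0 := by
      ext x
      rw [aux_defect_apply, ContinuousLinearMap.zero_apply, cma, hP2, hP2]
      abel
    rw [hC0] at hrank
    have : LinearMap.range ((0 : H →L[ℂ] H) : H →ₗ[ℂ] H) = ⊥ := by
      ext y; simp [LinearMap.mem_range, eq_comm]
    rw [this, rank_bot] at hrank
    norm_num at hrank
  have hirr' : IsIrreduciblePair V₂ V₁ := by
    intro S hS hred
    exact hirr S hS ⟨hred.2.1, hred.1, hred.2.2.2, hred.2.2.1⟩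
  have hshift1 : IsShift V₁ := aux_shift h₁ cm d0 hirr hns1
  have hshift2 : IsShift V₂ := aux_shift h₂ (fun x => (cm x).symm) d0' hirr' hns2
  refine ⟨hD0, hshift1, hshift2, hkerC, hrank1, ?_⟩
  intro f hf hfn
  rw [Submodule.mem_inf, LinearMap.mem_ker, LinearMap.mem_ker] at hf
  exact ⟨aux_orth h₁ h₂ d0' hf.1 hf.2 hfn, aux_dense h₁ h₂ cm d0 d0' hirr hf.1 hf.2 hfn⟩

end Main
end

section
/- Let (V1, V2) be a compact normal pair on a complex Hilbert space H, and let {f_i : i ∈ I} be an orthonormal basis of E_1 = ker(C(V1, V2) − I) consisting of eigenvectors of the cross-commutator [V2*, V1]. For each i let H_i be the closure of the linear span of {V1^m V2^n f_i : m, n ≥ 0}. If x ∈ H is orthogonal to H_i for every i ∈ I, then C(V1, V2) x = 0; equivalently, the orthogonal complement of ker C(V1, V2) is contained in the closure of the span of the union of the H_i. -/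
open ContinuousLinearMap

section Stmt19Aux

variable {H : Type*} [NormedAddCommGroup H] [InnerProductSpace ℂ H] [CompleteSpace H]

/-- Auxiliary: an isometry `a` satisfies `a† * a = 1`. -/
lemma stmt19_adjoint_mul_self {a : H →L[ℂ] H} (h : ∀ x : H, ‖a x‖ = ‖x‖) :
    adjoint a * a = 1 := by
  have h2 := (LinearMap.norm_map_iff_inner_map_map a).mp h
  ext v
  refine ext_inner_right ℂ fun y => ?_
  rw [mul_apply_eq_comp, adjoint_inner_left, ContinuousLinearMap.one_apply, h2]

/-- Auxiliary: for a normal operator, `t v = 0` iff `t† v = 0`. -/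
lemma stmt19_normal_zero_iff {t : H →L[ℂ] H}
    (hn : t ∘L adjoint t = adjoint t ∘L t) (v : H) :
    t v = 0 ↔ adjoint t v = 0 := by
  have key : (inner ℂ (t v) (t v) : ℂ) = inner ℂ (adjoint t v) (adjoint t v) := by
    have h1 : (inner ℂ (t v) (t v) : ℂ) = inner ℂ v ((adjoint t ∘L t) v) := by
      rw [comp_apply, adjoint_inner_right]
    have h2 : (inner ℂ (adjoint t v) (adjoint t v) : ℂ) = inner ℂ v ((t ∘L adjoint t) v) := by
      rw [comp_apply]; exact adjoint_inner_left t (adjoint t v) v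
    rw [h1, ← hn, ← h2]
  constructor
  · intro h
    rw [← inner_self_eq_zero (𝕜 := ℂ), ← key, h, inner_zero_left]
  · intro h
    rw [← inner_self_eq_zero (𝕜 := ℂ), key, h, inner_zero_left]

/-- Auxiliary: for a normal operator, an eigenvector of `t` is an eigenvector of `t†`
for the conjugate eigenvalue. -/
lemma stmt19_conj_eig {t : H →L[ℂ] H}
    (hn : t ∘L adjoint t = adjoint t ∘L t) {μ : ℂ} {g : H} (hg : t g = μ • g) :
    adjoint t g = (starRingEnd ℂ) μ • g := by
  have adj1 : adjoint (1 : H →L[ℂ] H) = 1 := adjoint_id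
  have hadj : adjoint (t - μ • 1) = adjoint t - (starRingEnd ℂ) μ • 1 := by
    rw [map_sub, map_smulₛₗ ContinuousLinearMap.adjoint, adj1]
  have hnn : (t - μ • 1) ∘L adjoint (t - μ • 1) = adjoint (t - μ • 1) ∘L (t - μ • 1) := by
    rw [hadj]
    show (t - μ • 1) * (adjoint t - (starRingEnd ℂ) μ • 1) =
      (adjoint t - (starRingEnd ℂ) μ • 1) * (t - μ • 1)
    have hmul : t * adjoint t = adjoint t * t := hn
    simp only [mul_sub, sub_mul, mul_smul_comm, smul_mul_assoc, mul_one, one_mul, hmul,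
      smul_smul, smul_sub]
    rw [mul_comm μ ((starRingEnd ℂ) μ)]
    abel
  have h0 : (t - μ • 1) g = 0 := by
    simp [ContinuousLinearMap.sub_apply, hg]
  have h1 := (stmt19_normal_zero_iff hnn g).mp h0
  rw [hadj] at h1
  have h2 : adjoint t g - (starRingEnd ℂ) μ • g = 0 := by
    simpa [ContinuousLinearMap.sub_apply] using h1
  exact sub_eq_zero.mp h2

/-- Auxiliary: a vector orthogonal to `A` applied to each `f i` is orthogonal to `A`
applied to anything in the closed span of the `f i`. -/
lemma stmt19_perp {ι : Type*} (f : ι → H) (z : H) (A : H →L[ℂ] H) (E : Submodule ℂ H)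
    (hE : (Submodule.span ℂ (Set.range f)).topologicalClosure = E)
    (h0 : ∀ i, (inner ℂ z (A (f i)) : ℂ) = 0) :
    ∀ u ∈ E, (inner ℂ z (A u) : ℂ) = 0 := by
  intro u hu
  rw [← hE] at hu
  have hle : (Submodule.span ℂ (Set.range f)).topologicalClosure ≤
      LinearMap.ker (((innerSL ℂ z).comp A : H →L[ℂ] ℂ) : H →ₗ[ℂ] ℂ) := by
    apply Submodule.topologicalClosure_minimal
    · rw [Submodule.span_le]
      rintro - ⟨i, rfl⟩
      simpa [LinearMap.mem_ker] using h0 i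
    · exact ContinuousLinearMap.isClosed_ker _
  have hker := hle hu
  simpa [LinearMap.mem_ker] using hker

set_option maxHeartbeats 1000000 in
/-- Auxiliary: the key operator identities for a commuting pair of isometries with
normal cross-commutator. -/
lemma stmt19_ids (V₁ V₂ : H →L[ℂ] H)
    (h1norm : ∀ x : H, ‖V₁ x‖ = ‖x‖) (h2norm : ∀ x : H, ‖V₂ x‖ = ‖x‖)
    (hcomm : V₁ ∘L V₂ = V₂ ∘L V₁)
    (hnormal : crossComm V₁ V₂ ∘L adjoint (crossComm V₁ V₂) =
      adjoint (crossComm V₁ V₂) ∘L crossComm V₁ V₂) :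
    adjoint (defectOp V₁ V₂) = defectOp V₁ V₂ ∧
    defectOp V₁ V₂ * V₁ = -(V₂ * crossComm V₁ V₂) ∧
    defectOp V₁ V₂ * V₂ = -(V₁ * adjoint (crossComm V₁ V₂)) ∧
    defectOp V₁ V₂ * defectOp V₁ V₂ = defectOp V₁ V₂ +
      V₂ * (crossComm V₁ V₂ * adjoint V₁) +
      V₁ * (adjoint (crossComm V₁ V₂) * adjoint V₂) ∧
    defectOp V₁ V₂ * crossComm V₁ V₂ = crossComm V₁ V₂ ∧
    defectOp V₁ V₂ * adjoint (crossComm V₁ V₂) = adjoint (crossComm V₁ V₂) ∧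
    crossComm V₁ V₂ * V₁ = 0 ∧
    crossComm V₁ V₂ * V₂ = 0 ∧
    adjoint (crossComm V₁ V₂) * V₂ = 0 := by
  set T := crossComm V₁ V₂ with hTdef
  set T' := adjoint T with hT'def
  set C := defectOp V₁ V₂ with hCdef
  have adj_mul : ∀ P Q : H →L[ℂ] H, adjoint (P * Q) = adjoint Q * adjoint P :=
    fun P Q => adjoint_comp P Q
  have adj_one : adjoint (1 : H →L[ℂ] H) = 1 := adjoint_id
  have ha : (adjoint V₁) * V₁ = 1 := stmt19_adjoint_mul_self h1norm
  have hb : (adjoint V₂) * V₂ = 1 := stmt19_adjoint_mul_self h2norm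
  have hab : V₁ * V₂ = V₂ * V₁ := hcomm
  have hab' : (adjoint V₁) * (adjoint V₂) = (adjoint V₂) * (adjoint V₁) := by
    have h := congrArg ContinuousLinearMap.adjoint hcomm
    rw [adjoint_comp, adjoint_comp] at h
    exact h.symm
  have hT_eq : T = (adjoint V₂) * V₁ - V₁ * (adjoint V₂) := by rw [hTdef]; rfl
  have hC_eq : C = 1 - V₁ * (adjoint V₁) - V₂ * (adjoint V₂) +
      V₁ * (V₂ * ((adjoint V₁) * (adjoint V₂))) := by
    rw [hCdef]; rfl
  have hT'_eq : T' = (adjoint V₁) * V₂ - V₂ * (adjoint V₁) := by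
    rw [hT'def, hT_eq, map_sub, adj_mul, adj_mul, adjoint_adjoint]
  have hnormal' : T ∘L adjoint T = adjoint T ∘L T := by rw [← hT'def]; exact hnormal
  clear_value T T' C
  have haX : ∀ X : H →L[ℂ] H, (adjoint V₁) * (V₁ * X) = X := fun X => by
    rw [← mul_assoc, ha, one_mul]
  have hbX : ∀ X : H →L[ℂ] H, (adjoint V₂) * (V₂ * X) = X := fun X => by
    rw [← mul_assoc, hb, one_mul]
  have hab'X : ∀ X : H →L[ℂ] H, (adjoint V₁) * ((adjoint V₂) * X) =
      (adjoint V₂) * ((adjoint V₁) * X) := fun X => by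
    rw [← mul_assoc, hab', mul_assoc]
  have habX : ∀ X : H →L[ℂ] H, V₁ * (V₂ * X) = V₂ * (V₁ * X) := fun X => by
    rw [← mul_assoc, hab, mul_assoc]
  have i1 : (adjoint V₁) * T = 0 := by
    rw [hT_eq, mul_sub, hab'X, ha, mul_one, haX, sub_self]
  have i2 : T * V₂ = 0 := by
    rw [hT_eq, sub_mul, mul_assoc, mul_assoc, hab, hbX, hb, mul_one, sub_self]
  have i1' : T' * V₁ = 0 := by
    rw [hT'_eq, sub_mul, mul_assoc, mul_assoc, ← hab, haX, ha, mul_one, sub_self]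
  have i3 : T * V₁ = 0 := by
    ext u
    rw [mul_apply_eq_comp, zero_apply]
    refine (stmt19_normal_zero_iff hnormal' (V₁ u)).mpr ?_
    have h := DFunLike.congr_fun i1' u
    rw [mul_apply_eq_comp, zero_apply] at h
    rw [← hT'def]; exact h
  have i4 : T' * V₂ = 0 := by
    ext u
    rw [mul_apply_eq_comp, zero_apply, hT'def]
    refine (stmt19_normal_zero_iff hnormal' (V₂ u)).mp ?_
    have h := DFunLike.congr_fun i2 u
    rw [mul_apply_eq_comp, zero_apply] at h
    exact h
  have j3 : (adjoint V₁) * T' = 0 := by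
    have h := congrArg ContinuousLinearMap.adjoint i3
    rw [adj_mul, map_zero] at h
    rw [hT'def]; exact h
  have j2 : (adjoint V₂) * T' = 0 := by
    have h := congrArg ContinuousLinearMap.adjoint i2
    rw [adj_mul, map_zero] at h
    rw [hT'def]; exact h
  have j4 : (adjoint V₂) * T = 0 := by
    have h := congrArg ContinuousLinearMap.adjoint i4
    rw [adj_mul, map_zero, hT'def, adjoint_adjoint] at h
    exact h
  have hba : (adjoint V₂) * V₁ = T + V₁ * (adjoint V₂) := by rw [hT_eq]; abel
  have hab2 : (adjoint V₁) * V₂ = T' + V₂ * (adjoint V₁) := by rw [hT'_eq]; abel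
  have hCa : C * V₁ = -(V₂ * T) := by
    rw [hC_eq]
    simp only [sub_mul, add_mul, one_mul, mul_assoc, ha, mul_one, hba, mul_add, i1,
      zero_add, haX, habX]
    abel
  have hCb : C * V₂ = -(V₁ * T') := by
    rw [hC_eq]
    simp only [sub_mul, add_mul, one_mul, mul_assoc, hb, mul_one, hab2, mul_add, habX]
    abel
  have hCC : C * C = C + V₂ * (T * (adjoint V₁)) + V₁ * (T' * (adjoint V₂)) := by
    have e1 : C * (V₁ * (adjoint V₁)) = -(V₂ * (T * (adjoint V₁))) := by
      rw [← mul_assoc, hCa, neg_mul, mul_assoc]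
    have e2 : C * (V₂ * (adjoint V₂)) = -(V₁ * (T' * (adjoint V₂))) := by
      rw [← mul_assoc, hCb, neg_mul, mul_assoc]
    have e3 : C * (V₁ * (V₂ * ((adjoint V₁) * (adjoint V₂)))) = 0 := by
      rw [← mul_assoc, hCa, neg_mul, mul_assoc, ← mul_assoc T V₂, i2, zero_mul, mul_zero,
        neg_zero]
    nth_rewrite 2 [hC_eq]
    rw [mul_add, mul_sub, mul_sub, mul_one, e1, e2, e3]
    abel
  have hCT : C * T = T := by
    rw [hC_eq]
    simp only [sub_mul, add_mul, one_mul, mul_assoc, i1, j4, mul_zero, sub_zero, add_zero]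
  have hCT' : C * T' = T' := by
    rw [hC_eq]
    simp only [sub_mul, add_mul, one_mul, mul_assoc, j3, j2, mul_zero, sub_zero, add_zero]
  have hCsa : adjoint C = C := by
    rw [hC_eq]
    simp only [map_add, map_sub, adj_mul, adjoint_adjoint, adj_one]
    rw [← hab]
    simp only [mul_assoc]
    rw [← hab']
  exact ⟨hCsa, hCa, hCb, hCC, hCT, hCT', i3, i2, i4⟩

/-- Auxiliary: the closed subspace generated by an eigenvector is invariant under the
defect operator. -/
lemma stmt19_Cinv (V₁ V₂ C T T' : H →L[ℂ] H) (μ : ℂ) (g : H)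
    (hCa : C * V₁ = -(V₂ * T)) (hCb : C * V₂ = -(V₁ * T'))
    (i2 : T * V₂ = 0) (i3 : T * V₁ = 0) (i4 : T' * V₂ = 0)
    (hCg : C g = g) (hTg : T g = μ • g) (hT'g : T' g = (starRingEnd ℂ) μ • g) :
    ∀ y ∈ (Submodule.span ℂ
        (Set.range fun p : ℕ × ℕ => (V₁ ^ p.1) ((V₂ ^ p.2) g))).topologicalClosure,
      C y ∈ (Submodule.span ℂ
        (Set.range fun p : ℕ × ℕ => (V₁ ^ p.1) ((V₂ ^ p.2) g))).topologicalClosure := by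
  intro y hy
  have pCa : ∀ u : H, C (V₁ u) = -(V₂ (T u)) := fun u => by
    have h := DFunLike.congr_fun hCa u
    simpa [mul_apply] using h
  have pCb : ∀ u : H, C (V₂ u) = -(V₁ (T' u)) := fun u => by
    have h := DFunLike.congr_fun hCb u
    simpa [mul_apply] using h
  have pTa : ∀ u : H, T (V₁ u) = 0 := fun u => by
    have h := DFunLike.congr_fun i3 u
    simpa [mul_apply] using h
  have pTb : ∀ u : H, T (V₂ u) = 0 := fun u => by
    have h := DFunLike.congr_fun i2 u
    simpa [mul_apply] using h
  have pT'b : ∀ u : H, T' (V₂ u) = 0 := fun u => by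
    have h := DFunLike.congr_fun i4 u
    simpa [mul_apply] using h
  have hmem : ∀ q : ℕ × ℕ, (V₁ ^ q.1) ((V₂ ^ q.2) g) ∈ Submodule.span ℂ
      (Set.range fun p : ℕ × ℕ => (V₁ ^ p.1) ((V₂ ^ p.2) g)) :=
    fun q => Submodule.subset_span ⟨q, rfl⟩
  have hkey : ∀ p : ℕ × ℕ, C ((V₁ ^ p.1) ((V₂ ^ p.2) g)) ∈ Submodule.span ℂ
      (Set.range fun p : ℕ × ℕ => (V₁ ^ p.1) ((V₂ ^ p.2) g)) := by
    rintro ⟨m, n⟩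
    match m, n with
    | 0, 0 =>
      simp only [pow_zero, ContinuousLinearMap.one_apply]
      rw [hCg]
      simpa using hmem (0, 0)
    | 0, 1 =>
      simp only [pow_zero, pow_one, ContinuousLinearMap.one_apply]
      rw [pCb, hT'g, map_smul]
      exact Submodule.neg_mem _ (Submodule.smul_mem _ _ (by simpa using hmem (1, 0)))
    | 0, (n+2) =>
      simp only [pow_zero, ContinuousLinearMap.one_apply]
      rw [pow_succ', mul_apply_eq_comp, pCb, pow_succ', mul_apply_eq_comp, pT'b, map_zero, neg_zero]
      exact Submodule.zero_mem _
    | 1, 0 =>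
      simp only [pow_zero, pow_one, ContinuousLinearMap.one_apply]
      rw [pCa, hTg, map_smul]
      exact Submodule.neg_mem _ (Submodule.smul_mem _ _ (by simpa using hmem (0, 1)))
    | 1, (n+1) =>
      simp only [pow_one]
      rw [pow_succ', mul_apply_eq_comp, pCa, pTb, map_zero, neg_zero]
      exact Submodule.zero_mem _
    | (m+2), n =>
      rw [pow_succ', mul_apply_eq_comp, pCa, pow_succ', mul_apply_eq_comp, pTa, map_zero, neg_zero]
      exact Submodule.zero_mem _
  have hmaps : ∀ v ∈ Submodule.span ℂ
      (Set.range fun p : ℕ × ℕ => (V₁ ^ p.1) ((V₂ ^ p.2) g)),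
      C v ∈ Submodule.span ℂ (Set.range fun p : ℕ × ℕ => (V₁ ^ p.1) ((V₂ ^ p.2) g)) := by
    intro v hv
    induction hv using Submodule.span_induction with
    | mem w hw =>
      obtain ⟨p, rfl⟩ := hw
      exact hkey p
    | zero => rw [map_zero]; exact Submodule.zero_mem _
    | add u w hu hw ihu ihw => rw [map_add]; exact Submodule.add_mem _ ihu ihw
    | smul c u hu ihu => rw [map_smul]; exact Submodule.smul_mem _ _ ihu
  have hy' : y ∈ closure ((Submodule.span ℂ
      (Set.range fun p : ℕ × ℕ => (V₁ ^ p.1) ((V₂ ^ p.2) g)) : Submodule ℂ H) : Set H) := by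
    rw [← Submodule.topologicalClosure_coe]; exact hy
  have hCy := map_mem_closure C.continuous hy' (fun v hv => hmaps v hv)
  rw [← Submodule.topologicalClosure_coe] at hCy
  exact hCy

end Stmt19Aux

/-- For a compact normal pair and an orthonormal basis `{f i}` of
`E₁` consisting of eigenvectors of the cross-commutator, any vector orthogonal to all
of the generated subspaces `H_i` is annihilated by the defect operator. -/
theorem stmt_19 {H : Type*} [NormedAddCommGroup H] [InnerProductSpace ℂ H] [CompleteSpace H] {ι : Type*}
    (V₁ V₂ : H →L[ℂ] H)
    (hcnp : IsCompactNormalPair V₁ V₂)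
    (f : ι → H)
    (hfmem : ∀ i, f i ∈ LinearMap.ker ((defectOp V₁ V₂ - 1 : H →L[ℂ] H) : H →ₗ[ℂ] H))
    (hfon : Orthonormal ℂ f)
    (hfspan : (Submodule.span ℂ (Set.range f)).topologicalClosure =
      LinearMap.ker ((defectOp V₁ V₂ - 1 : H →L[ℂ] H) : H →ₗ[ℂ] H))
    (hfeig : ∀ i, ∃ μ : ℂ, crossComm V₁ V₂ (f i) = μ • f i)
    (x : H)
    (hx : ∀ i, ∀ y ∈ (Submodule.span ℂ
        (Set.range fun p : ℕ × ℕ => (V₁ ^ p.1) ((V₂ ^ p.2) (f i)))).topologicalClosure,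
      (inner ℂ x y : ℂ) = 0) :
    defectOp V₁ V₂ x = 0 := by
  obtain ⟨⟨⟨h1norm, h2norm, hcomm⟩, -⟩, -, hnormal⟩ := hcnp
  obtain ⟨hCsa, hCa, hCb, hCC, hCT, hCT', i3, i2, i4⟩ :=
    stmt19_ids V₁ V₂ h1norm h2norm hcomm hnormal
  let Sp : ι → Submodule ℂ H := fun i => (Submodule.span ℂ
    (Set.range fun p : ℕ × ℕ => (V₁ ^ p.1) ((V₂ ^ p.2) (f i)))).topologicalClosure
  have hx' : ∀ i, ∀ y ∈ Sp i, (inner ℂ x y : ℂ) = 0 := hx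
  have hgen : ∀ (i : ι) (p : ℕ × ℕ), (V₁ ^ p.1) ((V₂ ^ p.2) (f i)) ∈ Sp i :=
    fun i p => Submodule.le_topologicalClosure _ (Submodule.subset_span ⟨p, rfl⟩)
  have hAone : ∀ i, (1 : H →L[ℂ] H) (f i) ∈ Sp i := fun i => by simpa using hgen i (0, 0)
  have hAV₁ : ∀ i, V₁ (f i) ∈ Sp i := fun i => by simpa using hgen i (1, 0)
  have hAV₂ : ∀ i, V₂ (f i) ∈ Sp i := fun i => by simpa using hgen i (0, 1)
  have hMperp : ∀ z : H, (∀ i, ∀ y ∈ Sp i, (inner ℂ z y : ℂ) = 0) →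
      ∀ A : H →L[ℂ] H, (∀ i, A (f i) ∈ Sp i) →
      ∀ u ∈ LinearMap.ker ((defectOp V₁ V₂ - 1 : H →L[ℂ] H) : H →ₗ[ℂ] H), (inner ℂ z (A u) : ℂ) = 0 :=
    fun z hz A hA => stmt19_perp f z A _ hfspan (fun i => hz i (A (f i)) (hA i))
  have hCf : ∀ i, defectOp V₁ V₂ (f i) = f i := fun i => by
    have h := hfmem i
    rw [LinearMap.mem_ker, ContinuousLinearMap.coe_coe, ContinuousLinearMap.sub_apply, ContinuousLinearMap.one_apply,
      sub_eq_zero] at h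
    exact h
  have hMC : ∀ z : H, (∀ i, ∀ y ∈ Sp i, (inner ℂ z y : ℂ) = 0) →
      ∀ i, ∀ y ∈ Sp i, (inner ℂ (defectOp V₁ V₂ z) y : ℂ) = 0 := by
    intro z hz i y hy
    obtain ⟨μ, hμ⟩ := hfeig i
    have hμ' : adjoint (crossComm V₁ V₂) (f i) = (starRingEnd ℂ) μ • f i :=
      stmt19_conj_eig hnormal hμ
    have hyC : defectOp V₁ V₂ y ∈ Sp i :=
      stmt19_Cinv V₁ V₂ (defectOp V₁ V₂) (crossComm V₁ V₂) (adjoint (crossComm V₁ V₂))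
        μ (f i) hCa hCb i2 i3 i4 (hCf i) hμ hμ' y hy
    calc (inner ℂ (defectOp V₁ V₂ z) y : ℂ)
        = inner ℂ (adjoint (defectOp V₁ V₂) z) y := by rw [hCsa]
      _ = inner ℂ z (defectOp V₁ V₂ y) := adjoint_inner_left (defectOp V₁ V₂) y z
      _ = 0 := hz i _ hyC
  have pCC : ∀ u : H, defectOp V₁ V₂ (defectOp V₁ V₂ u) = defectOp V₁ V₂ u
      + V₂ (crossComm V₁ V₂ (adjoint V₁ u))
      + V₁ (adjoint (crossComm V₁ V₂) (adjoint V₂ u)) := fun u => by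
    have h := DFunLike.congr_fun hCC u
    simpa [mul_apply] using h
  have hTk : ∀ v : H, crossComm V₁ V₂ v ∈ LinearMap.ker ((defectOp V₁ V₂ - 1 : H →L[ℂ] H) : H →ₗ[ℂ] H) := fun v => by
    have h := DFunLike.congr_fun hCT v
    rw [mul_apply_eq_comp] at h
    rw [LinearMap.mem_ker, ContinuousLinearMap.coe_coe, ContinuousLinearMap.sub_apply, ContinuousLinearMap.one_apply, h,
      sub_self]
  have hT'k : ∀ v : H, adjoint (crossComm V₁ V₂) v ∈ LinearMap.ker ((defectOp V₁ V₂ - 1 : H →L[ℂ] H) : H →ₗ[ℂ] H) :=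
    fun v => by
    have h := DFunLike.congr_fun hCT' v
    rw [mul_apply_eq_comp] at h
    rw [LinearMap.mem_ker, ContinuousLinearMap.coe_coe, ContinuousLinearMap.sub_apply, ContinuousLinearMap.one_apply, h,
      sub_self]
  have hz1 : ∀ i, ∀ y ∈ Sp i, (inner ℂ (defectOp V₁ V₂ x) y : ℂ) = 0 := hMC x hx'
  have hz2 : ∀ i, ∀ y ∈ Sp i,
      (inner ℂ (defectOp V₁ V₂ (defectOp V₁ V₂ x)) y : ℂ) = 0 := hMC _ hz1
  have hMd : ∀ i, ∀ y ∈ Sp i,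
      (inner ℂ (defectOp V₁ V₂ (defectOp V₁ V₂ x) - defectOp V₁ V₂ x) y : ℂ) = 0 :=
    fun i y hy => by rw [inner_sub_left, hz2 i y hy, hz1 i y hy, sub_zero]
  have hval : defectOp V₁ V₂ (defectOp V₁ V₂ x) - defectOp V₁ V₂ x =
      V₂ (crossComm V₁ V₂ (adjoint V₁ x))
      + V₁ (adjoint (crossComm V₁ V₂) (adjoint V₂ x)) := by
    rw [pCC x]; abel
  have e1 : (inner ℂ (defectOp V₁ V₂ (defectOp V₁ V₂ x) - defectOp V₁ V₂ x)
      (V₂ (crossComm V₁ V₂ (adjoint V₁ x))) : ℂ) = 0 :=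
    hMperp _ hMd V₂ hAV₂ _ (hTk _)
  have e2 : (inner ℂ (defectOp V₁ V₂ (defectOp V₁ V₂ x) - defectOp V₁ V₂ x)
      (V₁ (adjoint (crossComm V₁ V₂) (adjoint V₂ x))) : ℂ) = 0 :=
    hMperp _ hMd V₁ hAV₁ _ (hT'k _)
  have hd0 : defectOp V₁ V₂ (defectOp V₁ V₂ x) - defectOp V₁ V₂ x = 0 := by
    rw [← inner_self_eq_zero (𝕜 := ℂ)]
    calc (inner ℂ (defectOp V₁ V₂ (defectOp V₁ V₂ x) - defectOp V₁ V₂ x)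
          (defectOp V₁ V₂ (defectOp V₁ V₂ x) - defectOp V₁ V₂ x) : ℂ)
        = inner ℂ (defectOp V₁ V₂ (defectOp V₁ V₂ x) - defectOp V₁ V₂ x)
            (V₂ (crossComm V₁ V₂ (adjoint V₁ x))
              + V₁ (adjoint (crossComm V₁ V₂) (adjoint V₂ x))) := by
          nth_rewrite 2 [hval]
          rfl
      _ = 0 := by rw [inner_add_right, e1, e2, add_zero]
  have hCz : defectOp V₁ V₂ (defectOp V₁ V₂ x) = defectOp V₁ V₂ x := sub_eq_zero.mp hd0
  have hker : defectOp V₁ V₂ x ∈ LinearMap.ker ((defectOp V₁ V₂ - 1 : H →L[ℂ] H) : H →ₗ[ℂ] H) := by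
    rw [LinearMap.mem_ker, ContinuousLinearMap.coe_coe, ContinuousLinearMap.sub_apply, ContinuousLinearMap.one_apply,
      hCz, sub_self]
  have hfinal : (inner ℂ (defectOp V₁ V₂ x) ((1 : H →L[ℂ] H) (defectOp V₁ V₂ x)) : ℂ) = 0 :=
    hMperp _ hz1 1 hAone _ hker
  rw [ContinuousLinearMap.one_apply] at hfinal
  exact inner_self_eq_zero.mp hfinal
end
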